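/- The map ν : ℂ² → ℂ⁴, ν(s,t) = (s³, s t², t³, s² t), restricted to ℂ² \ {(0,0)}, is exactly 3-to-1 onto its image: every point in the image of ν other than ν(0,0) has exactly 3 preimages. -/

import Mathlib

/-- The parameterization of the affine cone over the twisted cubic. -/
noncomputable def ν (p : ℂ × ℂ) : ℂ × ℂ × ℂ × ℂ :=
  (p.1 ^ 3, p.1 * p.2 ^ 2, p.2 ^ 3, p.1 ^ 2 * p.2)

/-!
`ν` is homogeneous of degree 3, so `ν (ω • p) = ν p` for every cube root of unity `ω`.
Conversely, if `ν (a, b) = ν (s, t)` then `s ^ 3 = a ^ 3` and `s ^ 2 t = a ^ 2 b` force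
`a t = s b`, so `(a, b)` is a multiple `ω • (s, t)`, and comparing cubes gives `ω ^ 3 = 1`.
Hence for `p ≠ 0` the fibre through `p` is the orbit of `p` under the three cube roots of unity,
on which `ω ↦ ω • p` is injective.
-/

lemma Complex.ncard_setOf_pow_eq_one {n : ℕ} (hn : n ≠ 0) : {ω : ℂ | ω ^ n = 1}.ncard = n := by
  have hroots : {ω : ℂ | ω ^ n = 1} = ↑(Polynomial.nthRootsFinset n (1 : ℂ)) := by
    ext ω
    simp [Polynomial.mem_nthRootsFinset (Nat.pos_of_ne_zero hn)]
  rw [hroots, Set.ncard_coe_finset, (Complex.isPrimitiveRoot_exp n hn).card_nthRootsFinset]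

lemma exists_smul_eq_of_mul_eq_mul {K : Type*} [Field K] {s t a b : K} (hst : (s, t) ≠ 0)
    (hcross : a * t = s * b) : ∃ c : K, (a, b) = c • (s, t) := by
  rcases eq_or_ne s 0 with rfl | hs
  · have ht : t ≠ 0 := fun ht => hst (by simp [ht])
    have ha : a = 0 := by simpa [ht] using hcross
    exact ⟨b / t, by simp [ha, div_mul_cancel₀ b ht]⟩
  · refine ⟨a / s, Prod.ext (div_mul_cancel₀ a hs).symm ?_⟩
    change b = a / s * t
    field_simp
    linear_combination -hcross

lemma nu_smul (c : ℂ) (p : ℂ × ℂ) : ν (c • p) = c ^ 3 • ν p := by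
  obtain ⟨s, t⟩ := p
  simp only [ν, Prod.smul_mk, smul_eq_mul, Prod.mk.injEq]
  refine ⟨?_, ?_, ?_, ?_⟩ <;> ring

lemma nu_eq_zero_iff {p : ℂ × ℂ} : ν p = 0 ↔ p = 0 := by
  constructor
  · intro h
    have hs : p.1 ^ 3 = 0 := congrArg Prod.fst h
    have ht : p.2 ^ 3 = 0 := congrArg (fun q => q.2.2.1) h
    exact Prod.ext (pow_eq_zero_iff three_ne_zero |>.mp hs)
      (pow_eq_zero_iff three_ne_zero |>.mp ht)
  · rintro rfl
    simp [ν]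

lemma mul_eq_mul_of_nu_eq {a b s t : ℂ} (h : ν (a, b) = ν (s, t)) : a * t = s * b := by
  simp only [ν, Prod.mk.injEq] at h
  obtain ⟨hcube, -, -, hsq⟩ := h
  rcases eq_or_ne a 0 with rfl | ha
  · have hs : s = 0 := pow_eq_zero_iff three_ne_zero |>.mp (by simpa using hcube.symm)
    simp [hs]
  · refine mul_left_cancel₀ (pow_ne_zero 2 ha) ?_
    linear_combination t * hcube - s * hsq

lemma pow_three_eq_one_of_nu_smul_eq {c : ℂ} {p : ℂ × ℂ} (hp : p ≠ 0) (h : ν (c • p) = ν p) :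
    c ^ 3 = 1 := by
  have hzero : (c ^ 3 - 1) • ν p = 0 := by rw [sub_smul, one_smul, ← nu_smul, h, sub_self]
  rw [smul_eq_zero, sub_eq_zero] at hzero
  exact hzero.resolve_right (mt nu_eq_zero_iff.mp hp)

lemma preimage_nu_singleton {p : ℂ × ℂ} (hp : p ≠ 0) :
    ν ⁻¹' {ν p} = (· • p) '' {ω : ℂ | ω ^ 3 = 1} := by
  ext ⟨a, b⟩
  simp only [Set.mem_preimage, Set.mem_singleton_iff, Set.mem_image, Set.mem_ofPred_eq]
  constructor
  · intro h
    obtain ⟨c, hc⟩ := exists_smul_eq_of_mul_eq_mul hp (mul_eq_mul_of_nu_eq h)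
    exact ⟨c, pow_three_eq_one_of_nu_smul_eq hp (hc ▸ h), hc.symm⟩
  · rintro ⟨ω, hω, hωp⟩
    rw [← hωp, nu_smul, hω, one_smul]

/-- Away from `ν (0,0)`, the map `ν` is exactly 3-to-1 onto its image. -/
theorem nu_three_to_one (q : ℂ × ℂ × ℂ × ℂ) (hq : q ∈ Set.range ν)
    (hne : q ≠ ν (0, 0)) : (ν ⁻¹' {q}).ncard = 3 := by
  obtain ⟨p, rfl⟩ := hq
  have hp : p ≠ 0 := fun h => hne (by rw [h, Prod.zero_eq_mk])
  rw [preimage_nu_singleton hp, Set.ncard_image_of_injective _ (smul_left_injective ℂ hp),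
    Complex.ncard_setOf_pow_eq_one three_ne_zero]
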